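/- Let r and r₀ be real numbers with r ≥ 1/2 and r₀ ≥ 1. Define G̃² : ℕ³ → [0, ∞) by G̃²(k, k₁, k₂) = χ[|k−k₁| ≤ 10]·2^{(1/2−r)k₂}·2^{(1−r₀)k₁} + χ[|k−k₂| ≤ 10]·2^{(r−r₀)k₁}·2^{(1−2r)k} + χ[|k₁−k₂| ≤ 10]·2^{(1/2−r)k}·2^{(1−r₀)k₁}, where χ[·] denotes the indicator of the stated condition. Then G̃² satisfies property (G). -/

import Mathlib

noncomputable section

open scoped ENNReal

/-- The condition that the two largest entries of the triple `(k, k₁, k₂)` differ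
by at most 10 (i.e. `max ≤ med + 10`). -/
def nearMax (k k₁ k₂ : ℕ) : Prop :=
  max k (max k₁ k₂) ≤ (k + k₁ + k₂ - max k (max k₁ k₂) - min k (min k₁ k₂)) + 10

instance : ∀ k k₁ k₂, Decidable (nearMax k k₁ k₂) := fun _ _ _ => Nat.decLe _ _

/-- Property (G): the trilinear summation bound for a weight `G : ℕ³ → [0,∞)`,
restricted to triples whose two largest entries differ by at most 10.
The sum is taken in `ℝ≥0∞` so that it is always well defined. -/
def propertyG (G : ℕ → ℕ → ℕ → ℝ) : Prop :=
  ∃ C : ℝ, ∀ a b c : ℕ → ℝ,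
    (∀ n, 0 ≤ a n) → (∀ n, 0 ≤ b n) → (∀ n, 0 ≤ c n) →
    Summable (fun n => (a n) ^ 2) → Summable (fun n => (b n) ^ 2) →
    Summable (fun n => (c n) ^ 2) →
    (∑' p : ℕ × ℕ × ℕ,
        if nearMax p.1 p.2.1 p.2.2 then
          ENNReal.ofReal (G p.1 p.2.1 p.2.2 * a p.1 * b p.2.1 * c p.2.2 /
            ((min p.1 (min p.2.1 p.2.2) : ℝ) + 1) ^ 10)
        else 0) ≤
      ENNReal.ofReal (C * Real.sqrt (∑' n, (a n) ^ 2) * Real.sqrt (∑' n, (b n) ^ 2) *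
        Real.sqrt (∑' n, (c n) ^ 2))

/-- The weight `G̃²` from Proposition 4.4 (estimates for dyadic pieces, part 2). -/
def Gwt2 (r r₀ : ℝ) (k k₁ k₂ : ℕ) : ℝ :=
  (if |(k : ℤ) - (k₁ : ℤ)| ≤ 10 then
      (2 : ℝ) ^ ((1 / 2 - r) * (k₂ : ℝ)) * (2 : ℝ) ^ ((1 - r₀) * (k₁ : ℝ)) else 0) +
  (if |(k : ℤ) - (k₂ : ℤ)| ≤ 10 then
      (2 : ℝ) ^ ((r - r₀) * (k₁ : ℝ)) * (2 : ℝ) ^ ((1 - 2 * r) * (k : ℝ)) else 0) +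
  (if |(k₁ : ℤ) - (k₂ : ℤ)| ≤ 10 then
      (2 : ℝ) ^ ((1 / 2 - r) * (k : ℝ)) * (2 : ℝ) ^ ((1 - r₀) * (k₁ : ℝ)) else 0)

/-! On a triple whose two largest entries are within 10 of each other, each summand of `G̃²` is
bounded: the first and third by `1`, their exponents being nonpositive, and the second by
`2 ^ (20 r)`, because `|k - k₂| ≤ 10` then forces `k₁ ≤ k + 20`. So it suffices that every weight
bounded on such triples has property (G). The summable factor `(m + 1)⁻¹⁰` sits on the smallest
index `m`, and the two other indices lie in a band `|i - j| ≤ 10`. The sum therefore splits into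
three products of a band sum `∑_{|i - j| ≤ 10} f i * g j ≤ 22 ‖f‖ ‖g‖` (Cauchy–Schwarz along each
of the finitely many diagonals) and a sum `∑ h m (m + 1)⁻¹⁰ ≤ ‖h‖ ∑ (m + 1)⁻¹⁰`. -/

open MeasureTheory

def l2norm (f : ℕ → ℝ≥0∞) : ℝ≥0∞ := (∑' n, f n ^ (2 : ℝ)) ^ (1 / 2 : ℝ)

lemma tsum_mul_le_l2norm_mul (f g : ℕ → ℝ≥0∞) : ∑' n, f n * g n ≤ l2norm f * l2norm g := by
  simpa [lintegral_count, l2norm] using ENNReal.lintegral_mul_le_Lp_mul_Lq Measure.count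
    Real.HolderConjugate.two_two (measurable_of_countable f).aemeasurable
    (measurable_of_countable g).aemeasurable

lemma le_l2norm (f : ℕ → ℝ≥0∞) (n : ℕ) : f n ≤ l2norm f := by
  calc f n = (f n ^ (2 : ℝ)) ^ (1 / 2 : ℝ) := by
        rw [← ENNReal.rpow_mul]; norm_num
    _ ≤ l2norm f := ENNReal.rpow_le_rpow (ENNReal.le_tsum n) (by norm_num)

lemma l2norm_comp_add_le (f : ℕ → ℝ≥0∞) (s : ℕ) : l2norm (fun n => f (n + s)) ≤ l2norm f :=
  ENNReal.rpow_le_rpow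
    (ENNReal.tsum_comp_le_tsum_of_injective (add_left_injective s) (fun n => f n ^ (2 : ℝ)))
    (by norm_num)

lemma tsum_mul_comp_add_le (f g : ℕ → ℝ≥0∞) (s : ℕ) :
    ∑' n, f n * g (n + s) ≤ l2norm f * l2norm g :=
  (tsum_mul_le_l2norm_mul f _).trans (by gcongr; exact l2norm_comp_add_le g s)

lemma l2norm_ofReal {a : ℕ → ℝ} (ha : ∀ n, 0 ≤ a n) (hs : Summable fun n => a n ^ 2) :
    l2norm (fun n => ENNReal.ofReal (a n)) = ENNReal.ofReal √(∑' n, a n ^ 2) := by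
  have hsq : ∀ n, ENNReal.ofReal (a n) ^ (2 : ℝ) = ENNReal.ofReal (a n ^ 2) := fun n => by
    rw [ENNReal.ofReal_rpow_of_nonneg (ha n) zero_le_two, Real.rpow_two]
  rw [l2norm, tsum_congr hsq, ← ENNReal.ofReal_tsum_of_nonneg (fun n => sq_nonneg _) hs,
    ENNReal.ofReal_rpow_of_nonneg (tsum_nonneg fun n => sq_nonneg _) (by norm_num),
    Real.sqrt_eq_rpow]

lemma tsum_tsum_band_le (N : ℕ) (f g : ℕ → ℝ≥0∞) :
    ∑' i, ∑' j, (if i ≤ j + N ∧ j ≤ i + N then f i * g j else 0) ≤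
      2 * (N + 1) * (l2norm f * l2norm g) := by
  have hsplit : ∀ i j, (if i ≤ j + N ∧ j ≤ i + N then f i * g j else 0) ≤
      ∑ s ∈ Finset.range (N + 1),
        ((if j = i + s then f i * g j else 0) + (if i = j + s then f i * g j else 0)) := by
    intro i j
    split_ifs with h
    · rcases le_total i j with hij | hji
      · refine le_trans ?_ (Finset.single_le_sum (fun _ _ => zero_le)
          (Finset.mem_range.2 (by omega : j - i < N + 1)))
        rw [if_pos (by omega : j = i + (j - i))]
        exact le_self_add
      · refine le_trans ?_ (Finset.single_le_sum (fun _ _ => zero_le)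
          (Finset.mem_range.2 (by omega : i - j < N + 1)))
        rw [if_pos (by omega : i = j + (i - j))]
        exact le_add_self
    · exact zero_le
  have hshift : ∀ s, ∑' i, ∑' j,
      ((if j = i + s then f i * g j else 0) + (if i = j + s then f i * g j else 0)) ≤
        2 * (l2norm f * l2norm g) := by
    intro s
    have h₁ : ∑' i, ∑' j, (if j = i + s then f i * g j else 0) = ∑' i, f i * g (i + s) := by
      simp
    have h₂ : ∑' i, ∑' j, (if i = j + s then f i * g j else 0) = ∑' j, g j * f (j + s) := by
      rw [ENNReal.tsum_comm]; simp [mul_comm]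
    simp only [ENNReal.tsum_add, h₁, h₂, two_mul]
    exact add_le_add (tsum_mul_comp_add_le f g s)
      ((tsum_mul_comp_add_le g f s).trans_eq (mul_comm _ _))
  calc _ ≤ ∑' i, ∑' j, ∑ s ∈ Finset.range (N + 1),
        ((if j = i + s then f i * g j else 0) + (if i = j + s then f i * g j else 0)) :=
        ENNReal.tsum_le_tsum fun i => ENNReal.tsum_le_tsum fun j => hsplit i j
    _ = ∑ s ∈ Finset.range (N + 1), ∑' i, ∑' j,
        ((if j = i + s then f i * g j else 0) + (if i = j + s then f i * g j else 0)) := by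
      simp only [Summable.tsum_finsetSum fun _ _ => ENNReal.summable]
    _ ≤ (Finset.range (N + 1)).card • (2 * (l2norm f * l2norm g)) :=
      Finset.sum_le_card_nsmul _ _ _ fun s _ => hshift s
    _ = 2 * (N + 1) * (l2norm f * l2norm g) := by
      rw [Finset.card_range, nsmul_eq_mul]; push_cast; ring

lemma nearMax_mul_le (w α β γ : ℕ → ℝ≥0∞) {k k₁ k₂ : ℕ} (h : nearMax k k₁ k₂) :
    α k * β k₁ * γ k₂ * w (min k (min k₁ k₂)) ≤
      (if k ≤ k₁ + 10 ∧ k₁ ≤ k + 10 then α k * β k₁ else 0) * (γ k₂ * w k₂) +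
      (if k ≤ k₂ + 10 ∧ k₂ ≤ k + 10 then α k * γ k₂ else 0) * (β k₁ * w k₁) +
      (if k₁ ≤ k₂ + 10 ∧ k₂ ≤ k₁ + 10 then β k₁ * γ k₂ else 0) * (α k * w k) := by
  unfold nearMax at h
  by_cases h₂ : k₂ ≤ k ∧ k₂ ≤ k₁
  · rw [if_pos (by omega : k ≤ k₁ + 10 ∧ k₁ ≤ k + 10), show min k (min k₁ k₂) = k₂ by omega]
    calc _ = α k * β k₁ * (γ k₂ * w k₂) := by ring
      _ ≤ _ := le_self_add.trans le_self_add
  by_cases h₁ : k₁ ≤ k ∧ k₁ ≤ k₂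
  · rw [if_pos (by omega : k ≤ k₂ + 10 ∧ k₂ ≤ k + 10), show min k (min k₁ k₂) = k₁ by omega]
    calc _ = α k * γ k₂ * (β k₁ * w k₁) := by ring
      _ ≤ _ := le_add_self.trans le_self_add
  · rw [if_pos (by omega : k₁ ≤ k₂ + 10 ∧ k₂ ≤ k₁ + 10), show min k (min k₁ k₂) = k by omega]
    calc _ = β k₁ * γ k₂ * (α k * w k) := by ring
      _ ≤ _ := le_add_self

lemma tsum_band_mul_le (w α β γ : ℕ → ℝ≥0∞) :
    (∑' i, ∑' j, (if i ≤ j + 10 ∧ j ≤ i + 10 then α i * β j else 0)) * ∑' n, γ n * w n ≤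
      22 * (∑' n, w n) * (l2norm α * l2norm β * l2norm γ) := by
  have hγ : ∑' n, γ n * w n ≤ l2norm γ * ∑' n, w n := by
    rw [← ENNReal.tsum_mul_left]
    exact ENNReal.tsum_le_tsum fun n => mul_le_mul_left (le_l2norm γ n) _
  calc _ ≤ 2 * (10 + 1) * (l2norm α * l2norm β) * (l2norm γ * ∑' n, w n) :=
        mul_le_mul' (tsum_tsum_band_le 10 α β) hγ
    _ = _ := by ring

lemma tsum_nearMax_le (w α β γ : ℕ → ℝ≥0∞) :
    ∑' p : ℕ × ℕ × ℕ, (if nearMax p.1 p.2.1 p.2.2 then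
      α p.1 * β p.2.1 * γ p.2.2 * w (min p.1 (min p.2.1 p.2.2)) else 0) ≤
      66 * (∑' n, w n) * (l2norm α * l2norm β * l2norm γ) := by
  set B : (ℕ → ℝ≥0∞) → (ℕ → ℝ≥0∞) → ℕ → ℕ → ℝ≥0∞ :=
    fun f g i j => if i ≤ j + 10 ∧ j ≤ i + 10 then f i * g j else 0
  calc _ ≤ ∑' k, ∑' k₁, ∑' k₂, (B α β k k₁ * (γ k₂ * w k₂) + B α γ k k₂ * (β k₁ * w k₁) +
          B β γ k₁ k₂ * (α k * w k)) := by
        simp only [ENNReal.tsum_prod']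
        refine ENNReal.tsum_le_tsum fun k => ENNReal.tsum_le_tsum fun k₁ =>
          ENNReal.tsum_le_tsum fun k₂ => ?_
        split_ifs with h
        exacts [nearMax_mul_le w α β γ h, zero_le]
    _ = (∑' i, ∑' j, B α β i j) * ∑' n, γ n * w n + (∑' i, ∑' j, B α γ i j) * ∑' n, β n * w n +
          (∑' i, ∑' j, B β γ i j) * ∑' n, α n * w n := by
        simp only [ENNReal.tsum_add, ENNReal.tsum_mul_left, ENNReal.tsum_mul_right]
    _ ≤ 22 * (∑' n, w n) * (l2norm α * l2norm β * l2norm γ) +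
          22 * (∑' n, w n) * (l2norm α * l2norm γ * l2norm β) +
          22 * (∑' n, w n) * (l2norm β * l2norm γ * l2norm α) :=
        add_le_add (add_le_add (tsum_band_mul_le w α β γ) (tsum_band_mul_le w α γ β))
          (tsum_band_mul_le w β γ α)
    _ = _ := by ring

lemma summable_one_div_nat_add_one_pow_ten : Summable fun n : ℕ => 1 / ((n : ℝ) + 1) ^ 10 := by
  have := (summable_nat_add_iff 1).mpr (Real.summable_one_div_nat_pow.mpr (by norm_num : 1 < 10))
  exact_mod_cast this

theorem propertyG_of_le {G : ℕ → ℕ → ℕ → ℝ} {M : ℝ}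
    (hG : ∀ k k₁ k₂, nearMax k k₁ k₂ → G k k₁ k₂ ≤ M) : propertyG G := by
  set S := ∑' n : ℕ, 1 / ((n : ℝ) + 1) ^ 10
  refine ⟨max M 0 * 66 * S, fun a b c ha hb hc sa sb sc => ?_⟩
  set w : ℕ → ℝ≥0∞ := fun n => ENNReal.ofReal (1 / ((n : ℝ) + 1) ^ 10)
  have hw : ∑' n, w n = ENNReal.ofReal S := (ENNReal.ofReal_tsum_of_nonneg
    (fun n => by positivity) summable_one_div_nat_add_one_pow_ten).symm
  have hterm : ∀ p : ℕ × ℕ × ℕ, (if nearMax p.1 p.2.1 p.2.2 then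
      ENNReal.ofReal (G p.1 p.2.1 p.2.2 * a p.1 * b p.2.1 * c p.2.2 /
        ((min p.1 (min p.2.1 p.2.2) : ℝ) + 1) ^ 10) else 0) ≤
      ENNReal.ofReal (max M 0) * (if nearMax p.1 p.2.1 p.2.2 then
        ENNReal.ofReal (a p.1) * ENNReal.ofReal (b p.2.1) * ENNReal.ofReal (c p.2.2) *
          w (min p.1 (min p.2.1 p.2.2)) else 0) := by
    rintro ⟨k, k₁, k₂⟩
    split_ifs with h
    · have habc : 0 ≤ a k * b k₁ * c k₂ := mul_nonneg (mul_nonneg (ha k) (hb k₁)) (hc k₂)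
      simp only [w, Nat.cast_min]
      rw [← ENNReal.ofReal_mul (ha k), ← ENNReal.ofReal_mul (mul_nonneg (ha k) (hb k₁)),
        ← ENNReal.ofReal_mul habc, ← ENNReal.ofReal_mul (le_max_right M 0)]
      refine ENNReal.ofReal_le_ofReal ?_
      calc _ = G k k₁ k₂ * (a k * b k₁ * c k₂ / (min (k : ℝ) (min k₁ k₂) + 1) ^ 10) := by ring
        _ ≤ max M 0 * (a k * b k₁ * c k₂ / (min (k : ℝ) (min k₁ k₂) + 1) ^ 10) :=
          mul_le_mul_of_nonneg_right ((hG k k₁ k₂ h).trans (le_max_left M 0))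
            (div_nonneg habc (by positivity))
        _ = _ := by ring
    · simp
  calc _ ≤ _ := ENNReal.tsum_le_tsum hterm
    _ = _ := ENNReal.tsum_mul_left
    _ ≤ ENNReal.ofReal (max M 0) * (66 * ENNReal.ofReal S * (ENNReal.ofReal √(∑' n, a n ^ 2) *
          ENNReal.ofReal √(∑' n, b n ^ 2) * ENNReal.ofReal √(∑' n, c n ^ 2))) := by
        gcongr
        refine (tsum_nearMax_le w (fun n => ENNReal.ofReal (a n)) (fun n => ENNReal.ofReal (b n))
          (fun n => ENNReal.ofReal (c n))).trans_eq ?_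
        rw [hw, l2norm_ofReal ha sa, l2norm_ofReal hb sb, l2norm_ofReal hc sc]
    _ = _ := by
        rw [ENNReal.ofReal_mul (by positivity), ENNReal.ofReal_mul (by positivity),
          ENNReal.ofReal_mul (by positivity), ENNReal.ofReal_mul (by positivity),
          ENNReal.ofReal_mul (by positivity), ENNReal.ofReal_ofNat]
        ring

lemma two_rpow_mul_two_rpow_le_one {x y : ℝ} (hx : x ≤ 0) (hy : y ≤ 0) :
    (2 : ℝ) ^ x * 2 ^ y ≤ 1 :=
  mul_le_one₀ (Real.rpow_le_one_of_one_le_of_nonpos one_le_two hx) (by positivity)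
    (Real.rpow_le_one_of_one_le_of_nonpos one_le_two hy)

lemma Gwt2_le {r r₀ : ℝ} (hr : 1 / 2 ≤ r) (hr₀ : 1 ≤ r₀) {k k₁ k₂ : ℕ} (h : nearMax k k₁ k₂) :
    Gwt2 r r₀ k k₁ k₂ ≤ 1 + 2 ^ (20 * r) + 1 := by
  have hk : (0 : ℝ) ≤ k := k.cast_nonneg
  have hk₁ : (0 : ℝ) ≤ k₁ := k₁.cast_nonneg
  have hk₂ : (0 : ℝ) ≤ k₂ := k₂.cast_nonneg
  unfold Gwt2
  refine add_le_add (add_le_add ?_ ?_) ?_ <;> split_ifs with hc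
  · exact two_rpow_mul_two_rpow_le_one (by nlinarith) (by nlinarith)
  · exact zero_le_one
  · have hk₁k : (k₁ : ℝ) ≤ k + 20 := by
      unfold nearMax at h
      rw [abs_le] at hc
      exact_mod_cast (by omega : k₁ ≤ k + 20)
    rw [← Real.rpow_add two_pos]
    refine Real.rpow_le_rpow_of_exponent_le one_le_two ?_
    rcases le_total r r₀ with hrr | hrr <;> nlinarith
  · positivity
  · exact two_rpow_mul_two_rpow_le_one (by nlinarith) (by nlinarith)
  · exact zero_le_one

theorem stmt19 (r r₀ : ℝ) (hr : 1 / 2 ≤ r) (hr₀ : 1 ≤ r₀) :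
    propertyG (Gwt2 r r₀) :=
  propertyG_of_le fun _ _ _ => Gwt2_le hr hr₀
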